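/- Let n ≥ 1, let 1 ≤ m < n, and let w, u be permutations of {1,2,…,n} such that w →^{r_m} u, witnessed by pairs (a_1,b_1),…,(a_s,b_s) with s = ℓ(u) − ℓ(w), a_i ≤ m < b_i, b_1,…,b_s pairwise distinct, u = wτ_{a_1b_1}⋯τ_{a_sb_s}, and ℓ(wτ_{a_1b_1}⋯τ_{a_ib_i}) = ℓ(w) + i for all i. Then for each index i with 1 ≤ i ≤ s, letting k = max{ j : 1 ≤ j ≤ s and a_j = a_i }, one has u(a_i) = w(b_k) and w(b_k) > u(b_k). -/

import Mathlib

/-!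
Let `k` be the last step of the chain that uses `a := aₖ`, put `b := bₖ`, and let `V` be the
partial product before step `k`. Every `aⱼ < m ≤ bⱼ` and the `bⱼ` are distinct, so `b` is moved
by no other transposition of the chain and `a` by none after step `k`; hence `u a = V b = w b` and
`u b = V a`. Step `k` raises the length, and right multiplication by `τ_{ab}` (`a < b`) lowers the
length whenever `V a > V b`, so `V a < V b`, i.e. `u b < w b`.
-/

/-- The length (number of inversions) of a permutation of `Fin n`
(representing `{1,…,n}` with `i : Fin n` standing for `i+1`). -/
def invLength {n : ℕ} (w : Equiv.Perm (Fin n)) : ℕ :=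
  (Finset.univ.filter fun p : Fin n × Fin n => p.1 < p.2 ∧ w p.2 < w p.1).card

/-- `w τ_{a₁b₁} ⋯ τ_{aₛbₛ}` for the list of pairs `L = [(a₁,b₁),…,(aₛ,bₛ)]`. -/
def chainProd {n : ℕ} (w : Equiv.Perm (Fin n)) (L : List (Fin n × Fin n)) :
    Equiv.Perm (Fin n) :=
  w * (L.map fun p => Equiv.swap p.1 p.2).prod

/-- The list `L = [(a₁,b₁),…,(aₛ,bₛ)]` is a chain witnessing `w ≤ₘ u`:
each `aᵢ ≤ m < bᵢ` (in 1-indexed terms, i.e. `(aᵢ : ℕ) < m ≤ (bᵢ : ℕ)` in 0-indexed `Fin n`),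
`u = w τ_{a₁b₁} ⋯ τ_{aₛbₛ}`, and `ℓ(w τ_{a₁b₁} ⋯ τ_{aᵢbᵢ}) = ℓ(w) + i` for all `i ≤ s`. -/
def IsMChain {n : ℕ} (m : ℕ) (w u : Equiv.Perm (Fin n)) (L : List (Fin n × Fin n)) : Prop :=
  (∀ p ∈ L, (p.1 : ℕ) < m ∧ m ≤ (p.2 : ℕ)) ∧
  u = chainProd w L ∧
  ∀ i, i ≤ L.length → invLength (chainProd w (L.take i)) = invLength w + i

/-- The `m`-Bruhat order `w ≤ₘ u`. -/
def mBruhat {n : ℕ} (m : ℕ) (w u : Equiv.Perm (Fin n)) : Prop :=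
  ∃ L, IsMChain m w u L

/-- `w →^{r_m} u` : as `w ≤ₘ u`, with the `bᵢ` pairwise distinct. -/
def rmRel {n : ℕ} (m : ℕ) (w u : Equiv.Perm (Fin n)) : Prop :=
  ∃ L, IsMChain m w u L ∧ (L.map Prod.snd).Nodup

open Equiv

lemma invLength_mul_swap_lt {n : ℕ} {v : Perm (Fin n)} {a b : Fin n} (hab : a < b)
    (hv : v b < v a) : invLength (v * swap a b) < invLength v := by
  set τ := swap a b
  -- `g` injects the inversions of `v * τ` into those of `v` other than `(a, b)`
  let g : Fin n × Fin n → Fin n × Fin n := fun p => if τ p.1 < τ p.2 then (τ p.1, τ p.2) else p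
  have hmaps : Set.MapsTo g
      (Finset.univ.filter fun p : Fin n × Fin n => p.1 < p.2 ∧ (v * τ) p.2 < (v * τ) p.1)
      ((Finset.univ.filter fun p : Fin n × Fin n => p.1 < p.2 ∧ v p.2 < v p.1).erase (a, b)) := by
    rintro ⟨x, y⟩ hxy
    simp only [Finset.coe_filter, Finset.mem_univ, true_and, Set.mem_ofPred_eq, Perm.mul_apply,
      Finset.coe_erase, Set.mem_sdiff, Set.mem_singleton_iff, g, τ, swap_apply_def] at hxy ⊢
    split_ifs at hxy ⊢ <;> grind
  have hinj : Set.InjOn g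
      (Finset.univ.filter fun p : Fin n × Fin n => p.1 < p.2 ∧ (v * τ) p.2 < (v * τ) p.1) := by
    rintro ⟨x, y⟩ hxy ⟨x', y'⟩ hxy' h
    simp only [Finset.coe_filter, Finset.mem_univ, true_and, Set.mem_ofPred_eq, g] at hxy hxy' h
    have hττ : ∀ z, τ (τ z) = z := swap_apply_self a b
    split_ifs at h with h₁ h₂ h₂
    · simp only [Prod.mk.injEq, τ.injective.eq_iff] at h
      rw [h.1, h.2]
    · simp only [Prod.mk.injEq] at h
      exact absurd (by rw [← h.1, ← h.2, hττ, hττ]; exact hxy.1) h₂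
    · simp only [Prod.mk.injEq] at h
      exact absurd (by rw [h.1, h.2, hττ, hττ]; exact hxy'.1) h₁
    · exact h
  calc invLength (v * τ) ≤ _ := Finset.card_le_card_of_injOn g hmaps hinj
    _ < invLength v := Finset.card_erase_lt_of_mem (by simp [hab, hv])

lemma lt_of_invLength_lt_invLength_mul_swap {n : ℕ} {v : Perm (Fin n)} {a b : Fin n} (hab : a < b)
    (h : invLength v < invLength (v * swap a b)) : v a < v b := by
  refine lt_of_le_of_ne (not_lt.1 fun hv => ?_) (v.injective.ne hab.ne)
  exact (h.trans (invLength_mul_swap_lt hab hv)).false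

@[simp]
lemma chainProd_nil {n : ℕ} (w : Perm (Fin n)) : chainProd w [] = w := by
  simp [chainProd]

lemma chainProd_append {n : ℕ} (w : Perm (Fin n)) (L₁ L₂ : List (Fin n × Fin n)) :
    chainProd w (L₁ ++ L₂) = chainProd (chainProd w L₁) L₂ := by
  simp [chainProd, mul_assoc]

lemma chainProd_cons {n : ℕ} (w : Perm (Fin n)) (p : Fin n × Fin n) (L : List (Fin n × Fin n)) :
    chainProd w (p :: L) = chainProd (w * swap p.1 p.2) L := by
  simp [chainProd, mul_assoc]

lemma chainProd_apply_of_forall_ne {n : ℕ} (w : Perm (Fin n)) {L : List (Fin n × Fin n)}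
    {x : Fin n} (h : ∀ p ∈ L, p.1 ≠ x ∧ p.2 ≠ x) : chainProd w L x = w x := by
  induction L generalizing w with
  | nil => rw [chainProd_nil]
  | cons p L ih =>
    obtain ⟨hp₁, hp₂⟩ := h p List.mem_cons_self
    rw [chainProd_cons, ih _ fun q hq => h q (List.mem_cons_of_mem _ hq), Perm.mul_apply,
      swap_apply_of_ne_of_ne hp₁.symm hp₂.symm]

lemma IsMChain.apply_of_eq_append {n m : ℕ} {w u : Perm (Fin n)} {L₁ L₂ : List (Fin n × Fin n)}
    {p : Fin n × Fin n} (hL : IsMChain m w u (L₁ ++ p :: L₂))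
    (hb : ((L₁ ++ p :: L₂).map Prod.snd).Nodup) (hp : ∀ q ∈ L₂, q.1 ≠ p.1) :
    u p.1 = w p.2 ∧ u p.2 < w p.2 := by
  obtain ⟨a, b⟩ := p
  obtain ⟨hbounds, rfl, hlen⟩ := hL
  have hab : (a : ℕ) < m ∧ m ≤ (b : ℕ) := hbounds (a, b) (by simp)
  have hfst_ne : ∀ q ∈ L₁ ++ (a, b) :: L₂, q.1 ≠ b := fun q hq h => by
    have := (hbounds q hq).1; rw [h] at this; omega
  have hsnd_ne : ∀ q ∈ L₁ ++ (a, b) :: L₂, q.2 ≠ a := fun q hq h => by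
    have := (hbounds q hq).2; rw [h] at this; omega
  simp only [List.map_append, List.map_cons, List.nodup_middle, List.nodup_cons, List.mem_append,
    List.mem_map, not_or, not_exists, not_and] at hb
  set V := chainProd w L₁
  have hVb : V b = w b := chainProd_apply_of_forall_ne w fun q hq =>
    ⟨hfst_ne q (by simp [hq]), hb.1.1 q hq⟩
  have hVab : V a < V b := by
    refine lt_of_invLength_lt_invLength_mul_swap (Fin.lt_def.2 (by omega)) ?_
    have h₀ : invLength V = invLength w + L₁.length := by simpa using hlen L₁.length (by simp)
    have h₁ : invLength (V * swap a b) = invLength w + (L₁.length + 1) := by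
      have h := hlen (L₁.length + 1) (by simp)
      rwa [List.take_append, List.take_of_length_le (by omega), Nat.add_sub_cancel_left,
        List.take_succ_cons, List.take_zero, chainProd_append, chainProd_cons, chainProd_nil] at h
    omega
  rw [chainProd_append, chainProd_cons,
    chainProd_apply_of_forall_ne _ fun q hq => ⟨hp q hq, hsnd_ne q (by simp [hq])⟩,
    chainProd_apply_of_forall_ne _ fun q hq => ⟨hfst_ne q (by simp [hq]), hb.1.2 q hq⟩]
  simp only [Perm.mul_apply, swap_apply_left, swap_apply_right]
  exact ⟨hVb, hVb ▸ hVab⟩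

lemma IsMChain.apply_getElem {n m : ℕ} {w u : Perm (Fin n)} {L : List (Fin n × Fin n)}
    (hL : IsMChain m w u L) (hb : (L.map Prod.snd).Nodup) {k : ℕ} (hk : k < L.length)
    (hlast : ∀ (j : ℕ) (hj : j < L.length), k < j → L[j].1 ≠ L[k].1) :
    u L[k].1 = w L[k].2 ∧ u L[k].2 < w L[k].2 := by
  have hsplit : L = L.take k ++ L[k] :: L.drop (k + 1) := by
    rw [← List.drop_eq_getElem_cons hk, List.take_append_drop]
  rw [hsplit] at hL hb
  refine hL.apply_of_eq_append hb fun q hq => ?_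
  obtain ⟨j, hj, rfl⟩ := List.mem_drop_iff_getElem.1 hq
  exact hlast _ _ (by omega)

theorem stmt4_general (n m : ℕ) (w u : Equiv.Perm (Fin n)) (L : List (Fin n × Fin n))
    (hL : IsMChain m w u L) (hb : (L.map Prod.snd).Nodup) :
    ∀ i : Fin L.length, ∃ k : Fin L.length,
      (L.get k).1 = (L.get i).1 ∧
      (∀ j : Fin L.length, (L.get j).1 = (L.get i).1 → j ≤ k) ∧
      u (L.get i).1 = w (L.get k).2 ∧
      u (L.get k).2 < w (L.get k).2 := by
  intro i
  let S := Finset.univ.filter fun j : Fin L.length => (L.get j).1 = (L.get i).1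
  have hiS : i ∈ S := Finset.mem_filter.2 ⟨Finset.mem_univ i, rfl⟩
  set k := S.max' ⟨i, hiS⟩
  have hk : (L.get k).1 = (L.get i).1 := (Finset.mem_filter.1 (S.max'_mem _)).2
  have hmax : ∀ j, (L.get j).1 = (L.get i).1 → j ≤ k := fun j hj =>
    S.le_max' j (Finset.mem_filter.2 ⟨Finset.mem_univ j, hj⟩)
  obtain ⟨hua, hub⟩ := hL.apply_getElem hb k.isLt fun j hj hkj h =>
    (hmax ⟨j, hj⟩ (h.trans hk)).not_gt hkj
  exact ⟨k, hk, hmax, by rw [← hk]; exact hua, hub⟩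

/-- given a chain with distinct `bᵢ` witnessing `w →^{r_m} u`,
for each index `i`, letting `k` be the largest index with `a_k = a_i`,
one has `u(a_i) = w(b_k)` and `w(b_k) > u(b_k)`. -/
theorem stmt4 (n m : ℕ) (hn : 1 ≤ n) (hm : 1 ≤ m) (hmn : m < n)
    (w u : Equiv.Perm (Fin n)) (L : List (Fin n × Fin n))
    (hL : IsMChain m w u L) (hb : (L.map Prod.snd).Nodup) :
    ∀ i : Fin L.length, ∃ k : Fin L.length,
      (L.get k).1 = (L.get i).1 ∧
      (∀ j : Fin L.length, (L.get j).1 = (L.get i).1 → j ≤ k) ∧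
      u (L.get i).1 = w (L.get k).2 ∧
      u (L.get k).2 < w (L.get k).2 :=
  stmt4_general n m w u L hL hb
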